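/- arXiv:1505.02117 — 6 statements merged into one kernel-verified Lean document; each statement's English description precedes it below -/
import Mathlib

section
/- For all x with 0 < x < 1, the binary entropy satisfies -x*log x - (1-x)*log(1-x) ≤ 2*log 2 * sqrt(x*(1-x)). -/
/-!
Away from the endpoints, `2t ≤ log ((1 + t) / (1 - t))` integrates to the Pinsker-type bound
`H(x) ≤ log 2 - (1 - 2x)² / 2`, which lies below `2 log 2 · √(x(1 - x))` as soon as
`√(x(1 - x)) ≥ log 2 - 1/2`, in particular for `x ∈ [1/16, 15/16]`.
Near `0`, write `x = r⁴`: then `-x log x = 4 r³ · (-r log r) ≤ 4 r³ (1 - r)` and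
`-(1 - x) log (1 - x) ≤ x`, so `H(x) ≤ 4r³ - 3r⁴ ≤ (5/4) r²`, while the right-hand side is
`2 log 2 · r² √(1 - r⁴) ≥ 1.3 r²`.
-/

open Real Set

lemma two_mul_le_log_one_add_sub_log_one_sub {t : ℝ} (h0 : 0 ≤ t) (h1 : t < 1) :
    2 * t ≤ log (1 + t) - log (1 - t) := by
  have hsum := hasSum_log_sub_log_of_abs_lt_one (abs_lt.2 ⟨by linarith, h1⟩)
  simpa using le_hasSum hsum 0 fun k _ => by positivity

lemma hasDerivAt_one_add_mul_log_add_one_sub_mul_log {t : ℝ} (h : |t| < 1) :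
    HasDerivAt (fun s => (1 + s) * log (1 + s) + (1 - s) * log (1 - s))
      (log (1 + t) - log (1 - t)) t := by
  obtain ⟨hlo, hhi⟩ := abs_lt.1 h
  have hplus := (hasDerivAt_mul_log (x := 1 + t) (by linarith)).comp t
    ((hasDerivAt_id t).const_add 1)
  have hminus := (hasDerivAt_mul_log (x := 1 - t) (by linarith)).comp t
    ((hasDerivAt_id t).const_sub 1)
  exact (hplus.add hminus).congr_deriv (by ring)

lemma sq_le_one_add_mul_log_add_one_sub_mul_log {t : ℝ} (h : |t| < 1) :
    t ^ 2 ≤ (1 + t) * log (1 + t) + (1 - t) * log (1 - t) := by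
  wlog ht : 0 ≤ t generalizing t
  · have := this (by rwa [abs_neg]) (by linarith)
    rw [neg_sq, sub_neg_eq_add, ← sub_eq_add_neg] at this
    linarith
  set φ : ℝ → ℝ := fun s => (1 + s) * log (1 + s) + (1 - s) * log (1 - s) - s ^ 2
  have hφ : ∀ s ∈ Ico (0 : ℝ) 1, HasDerivAt φ (log (1 + s) - log (1 - s) - 2 * s) s := by
    intro s ⟨hs0, hs1⟩
    exact ((hasDerivAt_one_add_mul_log_add_one_sub_mul_log
      (abs_lt.2 ⟨by linarith, hs1⟩)).sub (hasDerivAt_pow 2 s)).congr_deriv (by push_cast; ring)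
  have hmono : MonotoneOn φ (Ico 0 1) := by
    refine monotoneOn_of_hasDerivWithinAt_nonneg (convex_Ico 0 1)
      (f' := fun s => log (1 + s) - log (1 - s) - 2 * s)
      (fun s hs => (hφ s hs).continuousAt.continuousWithinAt) (fun s hs => ?_) (fun s hs => ?_)
    all_goals rw [interior_Ico] at hs
    · exact (hφ s (Ioo_subset_Ico_self hs)).hasDerivWithinAt
    · linarith [two_mul_le_log_one_add_sub_log_one_sub hs.1.le hs.2]
  simpa [φ] using hmono ⟨le_rfl, zero_lt_one⟩ ⟨ht, (abs_lt.1 h).2⟩ ht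

lemma binEntropy_le_log_two_sub {x : ℝ} (h0 : 0 < x) (h1 : x < 1) :
    binEntropy x ≤ log 2 - (1 - 2 * x) ^ 2 / 2 := by
  have h := sq_le_one_add_mul_log_add_one_sub_mul_log (t := 1 - 2 * x)
    (abs_lt.2 ⟨by linarith, by linarith⟩)
  rw [show 1 + (1 - 2 * x) = 2 * (1 - x) by ring, show 1 - (1 - 2 * x) = 2 * x by ring,
    log_mul two_ne_zero (by linarith), log_mul two_ne_zero h0.ne'] at h
  rw [binEntropy_eq_negMulLog_add_negMulLog_one_sub, negMulLog, negMulLog]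
  linarith

lemma negMulLog_pow_succ (r : ℝ) (n : ℕ) :
    negMulLog (r ^ (n + 1)) = (n + 1) * r ^ n * negMulLog r := by
  simp only [negMulLog, log_pow]
  push_cast
  ring

lemma negMulLog_pow_succ_le {r : ℝ} (hr : 0 ≤ r) (n : ℕ) :
    negMulLog (r ^ (n + 1)) ≤ (n + 1) * r ^ n * (1 - r) := by
  rw [negMulLog_pow_succ]
  exact mul_le_mul_of_nonneg_left (negMulLog_le_one_sub_self hr) (by positivity)

lemma binEntropy_pow_four_le {r : ℝ} (h0 : 0 < r) (h1 : r ≤ 1 / 2) :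
    binEntropy (r ^ 4) ≤ 2 * log 2 * sqrt (r ^ 4 * (1 - r ^ 4)) := by
  have hr4 : r ^ 4 ≤ 1 / 16 := by
    calc r ^ 4 ≤ (1 / 2) ^ 4 := by gcongr
      _ = 1 / 16 := by norm_num
  have hentropy : binEntropy (r ^ 4) ≤ 4 * r ^ 3 * (1 - r) + r ^ 4 := by
    rw [binEntropy_eq_negMulLog_add_negMulLog_one_sub]
    have := negMulLog_pow_succ_le h0.le 3
    norm_num at this
    linarith [negMulLog_le_one_sub_self (x := 1 - r ^ 4) (by linarith)]
  have hsqrt : 19 / 20 ≤ sqrt (1 - r ^ 4) := (le_sqrt (by norm_num) (by linarith)).2 (by linarith)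
  have hsplit : sqrt (r ^ 4 * (1 - r ^ 4)) = r ^ 2 * sqrt (1 - r ^ 4) := by
    rw [sqrt_mul (by positivity), show r ^ 4 = (r ^ 2) ^ 2 by ring, sqrt_sq (by positivity)]
  have hpoly : 4 * r ^ 3 * (1 - r) + r ^ 4 ≤ 5 / 4 * r ^ 2 := by
    nlinarith [mul_nonneg (sq_nonneg r) (mul_nonneg (by linarith : (0 : ℝ) ≤ 1 / 2 - r)
      (by linarith : (0 : ℝ) ≤ 5 / 6 - r))]
  have hconst : 5 / 4 ≤ 2 * log 2 * sqrt (1 - r ^ 4) := by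
    nlinarith [log_two_gt_d9]
  rw [hsplit]
  nlinarith [sq_nonneg r]

lemma log_two_sub_le_two_mul_log_two_mul_sqrt {x : ℝ} (h0 : 1 / 16 ≤ x) (h1 : x ≤ 15 / 16) :
    log 2 - (1 - 2 * x) ^ 2 / 2 ≤ 2 * log 2 * sqrt (x * (1 - x)) := by
  set S := sqrt (x * (1 - x))
  have hS2 : S ^ 2 = x * (1 - x) := sq_sqrt (by nlinarith)
  have hSlo : 1 / 5 ≤ S := (le_sqrt (by norm_num) (by nlinarith)).2 (by nlinarith)
  have hShi : S ≤ 1 / 2 := by nlinarith [sqrt_nonneg (x * (1 - x)), sq_nonneg (x - 1 / 2)]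
  have hfactor : 0 ≤ (1 - 2 * S) * ((1 + 2 * S) / 2 - log 2) :=
    mul_nonneg (by linarith) (by linarith [log_two_lt_d9])
  nlinarith

theorem binEntropy_le_two_mul_log_two_mul_sqrt {x : ℝ} (h0 : 0 < x) (h1 : x < 1) :
    binEntropy x ≤ 2 * log 2 * sqrt (x * (1 - x)) := by
  wlog hx : x ≤ 1 / 2 generalizing x
  · have := this (x := 1 - x) (by linarith) (by linarith) (by linarith)
    rwa [binEntropy_one_sub, sub_sub_cancel, mul_comm (1 - x)] at this
  rcases lt_or_ge x (1 / 16) with hsmall | hlarge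
  · set r := x ^ ((4 : ℕ)⁻¹ : ℝ)
    have hr4 : r ^ 4 = x := rpow_inv_natCast_pow h0.le (by norm_num)
    have hr : r ≤ 1 / 2 := by
      rw [← pow_le_pow_iff_left₀ (by positivity) (by norm_num) four_ne_zero, hr4]
      linarith
    rw [← hr4]
    exact binEntropy_pow_four_le (by positivity) hr
  · exact (binEntropy_le_log_two_sub h0 h1).trans
      (log_two_sub_le_two_mul_log_two_mul_sqrt hlarge (by linarith))

theorem stmt_0 (x : ℝ) (h0 : 0 < x) (h1 : x < 1) :
    -x * Real.log x - (1 - x) * Real.log (1 - x)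
      ≤ 2 * Real.log 2 * Real.sqrt (x * (1 - x)) := by
  have hH : binEntropy x = -x * log x - (1 - x) * log (1 - x) := by
    rw [binEntropy_eq_negMulLog_add_negMulLog_one_sub, negMulLog, negMulLog]
    ring
  exact hH ▸ binEntropy_le_two_mul_log_two_mul_sqrt h0 h1
end

section
/- For any β > 2 and any 1 ≤ ℓ, the double sum ∑_{j=1}^{ℓ} ∑_{k=ℓ+1}^{∞} 1/(1 + (k-j)^β) is bounded above by (∑_{j=0}^{∞} 1/sqrt(1 + 2 j^β))^2, and this bound is finite, uniformly in ℓ. -/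
/-!
Write `a j = 1 / √(1 + 2 j^β)`. By AM-GM, `(1 + 2 x^β)(1 + 2 y^β) ≤ (1 + x^β + y^β)^2`, and
`x^β + y^β ≤ (x + y)^β` since `β ≥ 1`; hence `1 / (1 + (m + n)^β) ≤ a m * a n`. With `m = ℓ - j`
and `n = k + 1`, the double sum is dominated by `(∑ j ∈ [1, ℓ], a (ℓ - j)) * ∑' k, a (k + 1)`,
and each factor is at most `∑' j, a j`, which converges because `a j ≤ j^(-β/2)` and `β / 2 > 1`.
-/

open Real Finset

section Weights

variable {β : ℝ}

lemma one_add_two_mul_mul_one_add_two_mul_le (p q : ℝ) :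
    (1 + 2 * p) * (1 + 2 * q) ≤ (1 + p + q) ^ 2 := by
  nlinarith [sq_nonneg (p - q)]

lemma sqrt_one_add_two_mul_rpow_mul_le (hβ : 1 ≤ β) {x y : ℝ} (hx : 0 ≤ x) (hy : 0 ≤ y) :
    √(1 + 2 * x ^ β) * √(1 + 2 * y ^ β) ≤ 1 + (x + y) ^ β := by
  have hxβ : 0 ≤ x ^ β := rpow_nonneg hx β
  have hyβ : 0 ≤ y ^ β := rpow_nonneg hy β
  rw [← sqrt_mul (by positivity)]
  calc √((1 + 2 * x ^ β) * (1 + 2 * y ^ β))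
      ≤ √((1 + x ^ β + y ^ β) ^ 2) := sqrt_le_sqrt (one_add_two_mul_mul_one_add_two_mul_le _ _)
    _ = 1 + x ^ β + y ^ β := sqrt_sq (by positivity)
    _ ≤ 1 + (x + y) ^ β := by linarith [add_rpow_le_rpow_add hx hy hβ]

lemma one_div_one_add_add_rpow_le (hβ : 1 ≤ β) {x y : ℝ} (hx : 0 ≤ x) (hy : 0 ≤ y) :
    1 / (1 + (x + y) ^ β) ≤ 1 / √(1 + 2 * x ^ β) * (1 / √(1 + 2 * y ^ β)) := by
  have hxβ : 0 ≤ x ^ β := rpow_nonneg hx β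
  have hyβ : 0 ≤ y ^ β := rpow_nonneg hy β
  rw [div_mul_div_comm, one_mul]
  exact one_div_le_one_div_of_le (by positivity) (sqrt_one_add_two_mul_rpow_mul_le hβ hx hy)

lemma one_div_sqrt_one_add_two_mul_rpow_le {x : ℝ} (hx : 0 < x) :
    1 / √(1 + 2 * x ^ β) ≤ (x ^ (β / 2))⁻¹ := by
  have hxβ : 0 < x ^ β := rpow_pos_of_pos hx β
  rw [one_div, div_eq_mul_one_div, rpow_mul hx.le, ← sqrt_eq_rpow]
  exact inv_anti₀ (sqrt_pos.mpr hxβ) (sqrt_le_sqrt (by linarith))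

lemma summable_one_div_sqrt_one_add_two_mul_rpow (hβ : 2 < β) :
    Summable fun j : ℕ => 1 / √(1 + 2 * (j : ℝ) ^ β) := by
  rw [← summable_nat_add_iff 1]
  have hp : Summable fun n : ℕ => (((n + 1 : ℕ) : ℝ) ^ (β / 2))⁻¹ :=
    (summable_nat_add_iff 1).mpr (summable_nat_rpow_inv.mpr (by linarith))
  exact hp.of_nonneg_of_le (fun _ => by positivity)
    fun n => one_div_sqrt_one_add_two_mul_rpow_le (by positivity)

end Weights

lemma sum_Icc_tsum_le_sq_tsum {a : ℕ → ℝ} (ha : 0 ≤ a) (hs : Summable a) {f : ℕ → ℕ → ℝ}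
    (hf₀ : ∀ m n, 0 ≤ f m n) (hf : ∀ m n, f m n ≤ a m * a n) (ℓ : ℕ) :
    ∑ j ∈ Icc 1 ℓ, ∑' k, f (ℓ - j) (k + 1) ≤ (∑' n, a n) ^ 2 := by
  have hs₁ : Summable fun k => a (k + 1) := (summable_nat_add_iff 1).mpr hs
  have htail : ∑' k, a (k + 1) ≤ ∑' n, a n :=
    hs₁.tsum_le_tsum_of_inj (· + 1) (add_left_injective 1) (fun n _ => ha n) (fun _ => le_rfl) hs
  have hinner (m : ℕ) : ∑' k, f m (k + 1) ≤ a m * ∑' n, a n :=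
    calc ∑' k, f m (k + 1)
        ≤ ∑' k, a m * a (k + 1) :=
          ((hs₁.mul_left _).of_nonneg_of_le (hf₀ m <| · + 1) (hf m <| · + 1)).tsum_le_tsum
            (hf m <| · + 1) (hs₁.mul_left _)
      _ = a m * ∑' k, a (k + 1) := tsum_mul_left
      _ ≤ a m * ∑' n, a n := mul_le_mul_of_nonneg_left htail (ha m)
  have houter : ∑ j ∈ Icc 1 ℓ, a (ℓ - j) ≤ ∑' n, a n := by
    rw [← sum_image fun x hx y hy h => by grind]
    exact hs.sum_le_tsum _ fun n _ => ha n
  calc ∑ j ∈ Icc 1 ℓ, ∑' k, f (ℓ - j) (k + 1)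
      ≤ ∑ j ∈ Icc 1 ℓ, a (ℓ - j) * ∑' n, a n := sum_le_sum fun j _ => hinner (ℓ - j)
    _ = (∑ j ∈ Icc 1 ℓ, a (ℓ - j)) * ∑' n, a n := (sum_mul ..).symm
    _ ≤ (∑' n, a n) * ∑' n, a n := mul_le_mul_of_nonneg_right houter (tsum_nonneg ha)
    _ = (∑' n, a n) ^ 2 := (sq _).symm

theorem stmt_2_general (β : ℝ) (hβ : 2 < β) (ℓ : ℕ) :
    (∑ j ∈ Finset.Icc 1 ℓ, ∑' k : ℕ, 1 / (1 + (((ℓ + 1 + k : ℕ) : ℝ) - (j : ℝ)) ^ β))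
        ≤ (∑' j : ℕ, 1 / Real.sqrt (1 + 2 * (j : ℝ) ^ β)) ^ 2
      ∧ Summable (fun j : ℕ => 1 / Real.sqrt (1 + 2 * (j : ℝ) ^ β)) := by
  have hsum := summable_one_div_sqrt_one_add_two_mul_rpow hβ
  refine ⟨?_, hsum⟩
  have hsplit : ∀ j ∈ Icc 1 ℓ, ∀ k : ℕ,
      ((ℓ + 1 + k : ℕ) : ℝ) - (j : ℝ) = ((ℓ - j : ℕ) : ℝ) + ((k + 1 : ℕ) : ℝ) := by
    intro j hj k
    rw [Nat.cast_sub (mem_Icc.mp hj).2]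
    push_cast
    ring
  rw [sum_congr rfl fun j hj => tsum_congr fun k => by rw [hsplit j hj k]]
  exact sum_Icc_tsum_le_sq_tsum (fun _ => by positivity) hsum
    (fun m n => by have := rpow_nonneg (by positivity : (0 : ℝ) ≤ m + n) β; positivity)
    (fun m n => one_div_one_add_add_rpow_le (by linarith) (Nat.cast_nonneg m) (Nat.cast_nonneg n)) ℓ

theorem stmt_2 (β : ℝ) (hβ : 2 < β) (ℓ : ℕ) (hℓ : 1 ≤ ℓ) :
    (∑ j ∈ Finset.Icc 1 ℓ, ∑' k : ℕ, 1 / (1 + (((ℓ + 1 + k : ℕ) : ℝ) - (j : ℝ)) ^ β))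
        ≤ (∑' j : ℕ, 1 / Real.sqrt (1 + 2 * (j : ℝ) ^ β)) ^ 2
      ∧ Summable (fun j : ℕ => 1 / Real.sqrt (1 + 2 * (j : ℝ) ^ β)) :=
  stmt_2_general β hβ ℓ
end

section
/- For any β > 2 and natural numbers j ≥ 1, k ≥ ℓ+1 with j ≤ ℓ, one has 1/(1 + (k-j)^β) ≤ (1/sqrt(1 + 2(ℓ-j)^β)) * (1/sqrt(1 + 2(k-ℓ)^β)). -/
/-!
Put `a = ℓ - j` and `b = k - ℓ`, so that `k - j = a + b`. Squaring, the claim is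
`(1 + 2 a^β) (1 + 2 b^β) ≤ (1 + (a + b)^β)^2`. Since
`(1 + x + y)^2 - (1 + 2x)(1 + 2y) = (x - y)^2`, the left side is at most `(1 + a^β + b^β)^2`,
and `a^β + b^β ≤ (a + b)^β` by superadditivity of `t ↦ t^β` for `β ≥ 1`.
-/

lemma one_add_two_mul_mul_one_add_two_mul_le_sq {x y : ℝ} :
    (1 + 2 * x) * (1 + 2 * y) ≤ (1 + (x + y)) ^ 2 := by
  nlinarith [sq_nonneg (x - y)]

lemma one_add_two_mul_rpow_mul_le_sq {a b p : ℝ} (ha : 0 ≤ a) (hb : 0 ≤ b) (hp : 1 ≤ p) :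
    (1 + 2 * a ^ p) * (1 + 2 * b ^ p) ≤ (1 + (a + b) ^ p) ^ 2 := by
  have hsum : 0 ≤ a ^ p + b ^ p := by positivity
  calc (1 + 2 * a ^ p) * (1 + 2 * b ^ p) ≤ (1 + (a ^ p + b ^ p)) ^ 2 :=
        one_add_two_mul_mul_one_add_two_mul_le_sq
    _ ≤ (1 + (a + b) ^ p) ^ 2 := by
        gcongr
        exact Real.add_rpow_le_rpow_add ha hb hp

lemma one_div_le_one_div_sqrt_mul_one_div_sqrt {A B C : ℝ} (hA : 0 < A) (hB : 0 < B)
    (hC : 0 < C) (h : A * B ≤ C ^ 2) :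
    1 / C ≤ 1 / √A * (1 / √B) := by
  rw [one_div_mul_one_div, ← Real.sqrt_mul hA.le]
  gcongr
  exact (Real.sqrt_le_sqrt h).trans_eq (Real.sqrt_sq hC.le)

theorem stmt_3_general (β : ℝ) (hβ : 2 < β) (j k ℓ : ℕ) (hjl : j ≤ ℓ)
    (hk : ℓ + 1 ≤ k) :
    1 / (1 + ((k : ℝ) - (j : ℝ)) ^ β)
      ≤ (1 / Real.sqrt (1 + 2 * ((ℓ : ℝ) - (j : ℝ)) ^ β))
        * (1 / Real.sqrt (1 + 2 * ((k : ℝ) - (ℓ : ℝ)) ^ β)) := by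
  have ha : (0 : ℝ) ≤ ℓ - j := sub_nonneg.2 (by exact_mod_cast hjl)
  have hb : (0 : ℝ) ≤ k - ℓ := sub_nonneg.2 (by exact_mod_cast (Nat.le_succ ℓ).trans hk)
  have hsplit : (k : ℝ) - j = (ℓ - j) + (k - ℓ) := by ring
  rw [hsplit]
  exact one_div_le_one_div_sqrt_mul_one_div_sqrt (by positivity) (by positivity) (by positivity)
    (one_add_two_mul_rpow_mul_le_sq ha hb (by linarith))

theorem stmt_3 (β : ℝ) (hβ : 2 < β) (j k ℓ : ℕ) (hj : 1 ≤ j) (hjl : j ≤ ℓ)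
    (hk : ℓ + 1 ≤ k) :
    1 / (1 + ((k : ℝ) - (j : ℝ)) ^ β)
      ≤ (1 / Real.sqrt (1 + 2 * ((ℓ : ℝ) - (j : ℝ)) ^ β))
        * (1 / Real.sqrt (1 + 2 * ((k : ℝ) - (ℓ : ℝ)) ^ β)) :=
  stmt_3_general β hβ j k ℓ hjl hk
end

section
/- Let Γ₁ be a self-adjoint ℓ×ℓ matrix with 0 ≤ Γ₁ ≤ I (all eigenvalues in [0,1]). Then -tr(Γ₁ log Γ₁ + (I-Γ₁) log(I-Γ₁)) ≤ 2 log 2 · tr (Γ₁(I - Γ₁))^{1/2}, where the entropy function x log x is extended by 0 at x = 0. -/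
/-!
The matrix inequality is the sum over the eigenvalues of the scalar inequality
`H(p) ≤ 2 log 2 · √(p(1-p))` for the binary entropy `H`. Writing `s = √(p(1-p))`, the gap
`g = 2 log 2 · s - H` vanishes at `p = 1/2` and `p = 1`, has `g'(1/2) = 0`, and
`g'' = (2s - log 2) / (2s³)`. Hence `g` is convex on `[1/2, m]`, where `2s ≥ log 2`, so it lies
above its horizontal tangent at `1/2`; and it is concave on `[m, 1]`, so it lies above the smaller
of its two nonnegative endpoint values. The symmetry `p ↦ 1 - p` covers `[0, 1/2]`.
-/

open Real Set

lemma nonneg_of_convexOn_Icc_of_concaveOn_Icc {f : ℝ → ℝ} {a m b : ℝ} (ham : a ≤ m) (hmb : m ≤ b)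
    (hconv : ConvexOn ℝ (Icc a m) f) (hconc : ConcaveOn ℝ (Icc m b) f)
    (hd : HasDerivAt f 0 a) (ha : 0 ≤ f a) (hb : 0 ≤ f b) :
    ∀ x ∈ Icc a b, 0 ≤ f x := by
  have hleft : ∀ x ∈ Icc a m, f a ≤ f x := by
    rintro x ⟨hax, hxm⟩
    rcases hax.eq_or_lt with rfl | hax
    · rfl
    have := hconv.le_slope_of_hasDerivAt (left_mem_Icc.2 ham) ⟨hax.le, hxm⟩ hax hd
    rw [slope_def_field, le_div_iff₀ (sub_pos.2 hax)] at this
    linarith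
  rintro x ⟨hax, hxb⟩
  rcases le_total x m with hxm | hmx
  · exact ha.trans (hleft x ⟨hax, hxm⟩)
  · have hm := ha.trans (hleft m ⟨ham, le_rfl⟩)
    exact (le_min hm hb).trans
      (hconc.min_le_of_mem_Icc (left_mem_Icc.2 hmb) (right_mem_Icc.2 hmb) ⟨hmx, hxb⟩)

lemma binEntropy_eq_neg_mul_log_add_mul_log (p : ℝ) :
    binEntropy p = -(p * log p + (1 - p) * log (1 - p)) := by
  simp only [binEntropy, log_inv]
  ring

noncomputable def entropySqrtGap (p : ℝ) : ℝ := 2 * log 2 * √(p * (1 - p)) - binEntropy p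

lemma continuous_entropySqrtGap : Continuous entropySqrtGap := by
  unfold entropySqrtGap
  fun_prop

lemma hasDerivAt_sqrt_mul_one_sub {p : ℝ} (hp0 : 0 < p) (hp1 : p < 1) :
    HasDerivAt (fun p ↦ √(p * (1 - p))) ((1 - 2 * p) / (2 * √(p * (1 - p)))) p := by
  have hq : HasDerivAt (fun p : ℝ ↦ p * (1 - p)) (1 - 2 * p) p := by
    refine ((hasDerivAt_id' p).mul ((hasDerivAt_id' p).const_sub 1)).congr_deriv ?_
    ring
  exact hq.sqrt (by nlinarith)

noncomputable def entropySqrtGapDeriv (p : ℝ) : ℝ :=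
  log 2 * (1 - 2 * p) / √(p * (1 - p)) - (log (1 - p) - log p)

lemma hasDerivAt_entropySqrtGap {p : ℝ} (hp0 : 0 < p) (hp1 : p < 1) :
    HasDerivAt entropySqrtGap (entropySqrtGapDeriv p) p := by
  have hs : 0 < √(p * (1 - p)) := sqrt_pos.2 (by nlinarith)
  refine (((hasDerivAt_sqrt_mul_one_sub hp0 hp1).const_mul (2 * log 2)).sub
    (hasDerivAt_binEntropy hp0.ne' (by linarith))).congr_deriv ?_
  rw [entropySqrtGapDeriv]
  field_simp

lemma hasDerivAt_entropySqrtGapDeriv {p : ℝ} (hp0 : 0 < p) (hp1 : p < 1) :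
    HasDerivAt entropySqrtGapDeriv
      ((2 * √(p * (1 - p)) - log 2) / (2 * √(p * (1 - p)) ^ 3)) p := by
  have hq : 0 < p * (1 - p) := by nlinarith
  have hs : 0 < √(p * (1 - p)) := sqrt_pos.2 hq
  have hsq : √(p * (1 - p)) ^ 2 = p * (1 - p) := sq_sqrt hq.le
  have h1p : 1 - p ≠ 0 := by linarith
  have hlin : HasDerivAt (fun p : ℝ ↦ log 2 * (1 - 2 * p)) (log 2 * -2) p := by
    simpa using ((hasDerivAt_id p).const_mul 2).const_sub 1 |>.const_mul (log 2)
  have hlog1 : HasDerivAt (fun p : ℝ ↦ log (1 - p)) (-1 / (1 - p)) p := by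
    simpa using ((hasDerivAt_id' p).const_sub 1).log (by linarith)
  refine ((hlin.div (hasDerivAt_sqrt_mul_one_sub hp0 hp1) hs.ne').sub
    (hlog1.sub (hasDerivAt_log hp0.ne'))).congr_deriv ?_
  field_simp
  linear_combination (2 * √(p * (1 - p)) - 4 * log 2 * (p * (1 - p))) * hsq

lemma convexOn_entropySqrtGap {a b : ℝ} (ha : 0 ≤ a) (hb : b ≤ 1)
    (hsign : ∀ p ∈ Ioo a b, log 2 ≤ 2 * √(p * (1 - p))) :
    ConvexOn ℝ (Icc a b) entropySqrtGap := by
  have hmem : ∀ p ∈ Ioo a b, 0 < p ∧ p < 1 := fun p hp ↦ ⟨by linarith [hp.1], by linarith [hp.2]⟩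
  refine convexOn_of_hasDerivWithinAt2_nonneg (convex_Icc a b) (f' := entropySqrtGapDeriv)
    (f'' := fun p ↦ (2 * √(p * (1 - p)) - log 2) / (2 * √(p * (1 - p)) ^ 3))
    continuous_entropySqrtGap.continuousOn (fun p hp ↦ ?_) (fun p hp ↦ ?_) (fun p hp ↦ ?_)
  all_goals simp only [interior_Icc] at hp ⊢; obtain ⟨hp0, hp1⟩ := hmem p hp
  · exact (hasDerivAt_entropySqrtGap hp0 hp1).hasDerivWithinAt
  · exact (hasDerivAt_entropySqrtGapDeriv hp0 hp1).hasDerivWithinAt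
  · exact div_nonneg (sub_nonneg.2 (hsign p hp)) (by positivity)

lemma concaveOn_entropySqrtGap {a b : ℝ} (ha : 0 ≤ a) (hb : b ≤ 1)
    (hsign : ∀ p ∈ Ioo a b, 2 * √(p * (1 - p)) ≤ log 2) :
    ConcaveOn ℝ (Icc a b) entropySqrtGap := by
  have hmem : ∀ p ∈ Ioo a b, 0 < p ∧ p < 1 := fun p hp ↦ ⟨by linarith [hp.1], by linarith [hp.2]⟩
  refine concaveOn_of_hasDerivWithinAt2_nonpos (convex_Icc a b) (f' := entropySqrtGapDeriv)
    (f'' := fun p ↦ (2 * √(p * (1 - p)) - log 2) / (2 * √(p * (1 - p)) ^ 3))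
    continuous_entropySqrtGap.continuousOn (fun p hp ↦ ?_) (fun p hp ↦ ?_) (fun p hp ↦ ?_)
  all_goals simp only [interior_Icc] at hp ⊢; obtain ⟨hp0, hp1⟩ := hmem p hp
  · exact (hasDerivAt_entropySqrtGap hp0 hp1).hasDerivWithinAt
  · exact (hasDerivAt_entropySqrtGapDeriv hp0 hp1).hasDerivWithinAt
  · exact div_nonpos_of_nonpos_of_nonneg (sub_nonpos.2 (hsign p hp)) (by positivity)

lemma two_mul_sqrt_mul_one_sub (p : ℝ) : 2 * √(p * (1 - p)) = √(1 - (2 * p - 1) ^ 2) := by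
  rw [show 1 - (2 * p - 1) ^ 2 = 2 ^ 2 * (p * (1 - p)) by ring, sqrt_mul (sq_nonneg 2),
    sqrt_sq zero_le_two]

lemma entropySqrtGap_two_inv : entropySqrtGap 2⁻¹ = 0 := by
  rw [entropySqrtGap, mul_right_comm, two_mul_sqrt_mul_one_sub, binEntropy_two_inv]
  norm_num

lemma entropySqrtGapDeriv_two_inv : entropySqrtGapDeriv 2⁻¹ = 0 := by
  norm_num [entropySqrtGapDeriv]

lemma entropySqrtGap_nonneg {p : ℝ} (hp : p ∈ Icc 2⁻¹ 1) : 0 ≤ entropySqrtGap p := by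
  have hc0 : 0 < log 2 := log_pos one_lt_two
  have hc1 : log 2 < 1 := log_two_lt_d9.trans (by norm_num)
  -- `(1 + r) / 2` is the inflection point, where `2 * √(p * (1 - p)) = log 2`.
  set r := √(1 - log 2 ^ 2)
  have hr : r ^ 2 = 1 - log 2 ^ 2 := sq_sqrt (by nlinarith)
  have hr0 : 0 ≤ r := sqrt_nonneg _
  have hr1 : r ≤ 1 := by nlinarith
  refine nonneg_of_convexOn_Icc_of_concaveOn_Icc (m := (1 + r) / 2) (by linarith) (by linarith)
    (convexOn_entropySqrtGap (by norm_num) (by linarith) fun q hq ↦ ?_)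
    (concaveOn_entropySqrtGap (by linarith) le_rfl fun q hq ↦ ?_)
    (entropySqrtGapDeriv_two_inv ▸ hasDerivAt_entropySqrtGap (by norm_num) (by norm_num))
    entropySqrtGap_two_inv.ge (by simp [entropySqrtGap]) p hp
  · rw [two_mul_sqrt_mul_one_sub, le_sqrt' hc0]
    nlinarith [hq.1, hq.2]
  · rw [two_mul_sqrt_mul_one_sub, sqrt_le_left hc0.le]
    nlinarith [hq.1, hq.2]

theorem binEntropy_le_two_log_two_mul_sqrt {p : ℝ} (hp0 : 0 ≤ p) (hp1 : p ≤ 1) :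
    binEntropy p ≤ 2 * log 2 * √(p * (1 - p)) := by
  wlog hp : 2⁻¹ ≤ p generalizing p
  · have := this (p := 1 - p) (by linarith) (by linarith) (by linarith)
    rwa [binEntropy_one_sub, sub_sub_cancel, mul_comm (1 - p)] at this
  exact sub_nonneg.1 (entropySqrtGap_nonneg ⟨hp, hp1⟩)

theorem stmt_5 {ℓ : ℕ} (Γ : Matrix (Fin ℓ) (Fin ℓ) ℂ) (hΓ : Γ.IsHermitian)
    (h0 : ∀ i, 0 ≤ hΓ.eigenvalues i) (h1 : ∀ i, hΓ.eigenvalues i ≤ 1) :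
    -(∑ i, (hΓ.eigenvalues i * Real.log (hΓ.eigenvalues i)
        + (1 - hΓ.eigenvalues i) * Real.log (1 - hΓ.eigenvalues i)))
      ≤ 2 * Real.log 2 * ∑ i, Real.sqrt (hΓ.eigenvalues i * (1 - hΓ.eigenvalues i)) := by
  rw [Finset.mul_sum, ← Finset.sum_neg_distrib]
  refine Finset.sum_le_sum fun i _ ↦ ?_
  rw [← binEntropy_eq_neg_mul_log_add_mul_log]
  exact binEntropy_le_two_log_two_mul_sqrt (h0 i) (h1 i)
end

section
/- (Peierls–Bogoliubov inequality) For any convex function f : ℝ → ℝ and any m×m Hermitian matrix A, tr f(A) ≥ ∑_{j=1}^m f(A_{jj}). -/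
/-!
Writing `A = U D U*` with `U` unitary and `D` the diagonal of eigenvalues, each diagonal entry
`A j j = ∑ i, |U j i|² λ i` is a convex combination of the eigenvalues, with weights forming the
doubly stochastic matrix `(|U j i|²)`. Jensen's inequality in each row, followed by summing over
`j` and using that the columns also sum to one, gives the inequality.
-/

open Matrix

theorem ConvexOn.sum_map_le_of_mem_doublyStochastic {𝕜 E β n : Type*} [Fintype n] [DecidableEq n]
    [Field 𝕜] [LinearOrder 𝕜] [IsStrictOrderedRing 𝕜] [AddCommGroup E] [AddCommGroup β]
    [PartialOrder β] [IsOrderedAddMonoid β] [Module 𝕜 E] [Module 𝕜 β] [IsStrictOrderedModule 𝕜 β]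
    {s : Set E} {f : E → β} (hf : ConvexOn 𝕜 s f) {M : Matrix n n 𝕜}
    (hM : M ∈ doublyStochastic 𝕜 n) {x : n → E} (hx : ∀ i, x i ∈ s) :
    ∑ j, f (∑ i, M j i • x i) ≤ ∑ i, f (x i) :=
  calc ∑ j, f (∑ i, M j i • x i)
      ≤ ∑ j, ∑ i, M j i • f (x i) := Finset.sum_le_sum fun j _ =>
        hf.map_sum_le (fun i _ => nonneg_of_mem_doublyStochastic hM)
          (sum_row_of_mem_doublyStochastic hM j) fun i _ => hx i
    _ = ∑ i, f (x i) := by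
        rw [Finset.sum_comm]
        simp only [← Finset.sum_smul, sum_col_of_mem_doublyStochastic hM, one_smul]

section

variable {𝕜 n : Type*} [RCLike 𝕜] [Fintype n] [DecidableEq n]

theorem Matrix.mem_doublyStochastic_of_mem_unitaryGroup {U : Matrix n n 𝕜}
    (hU : U ∈ unitaryGroup n 𝕜) : of (fun i j => ‖U i j‖ ^ 2) ∈ doublyStochastic ℝ n := by
  rw [mem_doublyStochastic_iff_sum]
  refine ⟨fun _ _ => sq_nonneg _, fun i => ?_, fun j => ?_⟩
  · have h := congrFun (congrFun (mem_unitaryGroup_iff.mp hU) i) i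
    simp only [mul_apply, star_apply, RCLike.star_def, RCLike.mul_conj, one_apply_eq] at h
    exact_mod_cast h
  · have h := congrFun (congrFun (mem_unitaryGroup_iff'.mp hU) j) j
    simp only [mul_apply, star_apply, RCLike.star_def, RCLike.conj_mul, one_apply_eq] at h
    exact_mod_cast h

theorem Matrix.re_mul_diagonal_mul_star_apply_self (U : Matrix n n 𝕜) (d : n → ℝ) (j : n) :
    RCLike.re ((U * diagonal (RCLike.ofReal ∘ d) * star U : Matrix n n 𝕜) j j) =
      ∑ i, ‖U j i‖ ^ 2 * d i := by
  rw [mul_apply]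
  simp only [mul_diagonal, star_apply, Function.comp_apply, mul_right_comm _ (RCLike.ofReal _),
    RCLike.star_def, RCLike.mul_conj]
  simp only [map_sum, RCLike.mul_re, RCLike.re_ofReal_pow, RCLike.ofReal_re, RCLike.im_ofReal_pow,
    RCLike.ofReal_im, mul_zero, sub_zero]

theorem Matrix.IsHermitian.re_diag_eq_sum {A : Matrix n n 𝕜} (hA : A.IsHermitian) (j : n) :
    RCLike.re (A j j) =
      ∑ i, ‖(hA.eigenvectorUnitary : Matrix n n 𝕜) j i‖ ^ 2 * hA.eigenvalues i := by
  conv_lhs => rw [hA.spectral_theorem]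
  exact re_mul_diagonal_mul_star_apply_self _ _ j

theorem Matrix.IsHermitian.sum_map_re_diag_le {f : ℝ → ℝ} {s : Set ℝ} (hf : ConvexOn ℝ s f)
    {A : Matrix n n 𝕜} (hA : A.IsHermitian) (hs : ∀ i, hA.eigenvalues i ∈ s) :
    ∑ j, f (RCLike.re (A j j)) ≤ ∑ i, f (hA.eigenvalues i) := by
  simp only [hA.re_diag_eq_sum]
  exact hf.sum_map_le_of_mem_doublyStochastic
    (mem_doublyStochastic_of_mem_unitaryGroup hA.eigenvectorUnitary.2) hs

end

theorem stmt_6 {m : ℕ} (f : ℝ → ℝ) (hf : ConvexOn ℝ Set.univ f)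
    (A : Matrix (Fin m) (Fin m) ℂ) (hA : A.IsHermitian) :
    ∑ j, f ((A j j).re) ≤ ∑ i, f (hA.eigenvalues i) :=
  hA.sum_map_re_diag_le hf fun _ => Set.mem_univ _
end

section
/- Let S = A + B where A is real symmetric and B real antisymmetric (n×n), with singular value decomposition U S V^t = Λ = diag(λ₁,…,λₙ) for real orthogonal U, V. Then with W = (1/2)[[V+U, V−U],[V−U, V+U]], one has [[A,B],[−B,−A]] = W^t [[Λ,0],[0,−Λ]] W. -/
/-!
Orthogonality turns the decomposition into `Uᵀ Λ V = A + B`, and transposing it (with `Λ`, `A`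
symmetric and `B` antisymmetric) gives `Vᵀ Λ U = A - B`. Expanding the block product, the
conjugate `Wᵀ diag(Λ, -Λ) W` has blocks `±(Uᵀ Λ V ± Vᵀ Λ U) / 2`, which are `±A` and `±B`.
-/

open Matrix

section

variable {R m n : Type*} [CommRing R] [Fintype m] [Fintype n] [DecidableEq m] [DecidableEq n]

theorem Matrix.transpose_mul_mul_eq_of_mul_mul_transpose_eq {U : Matrix m m R}
    {V : Matrix n n R} {S D : Matrix m n R} (hU : Uᵀ * U = 1) (hV : Vᵀ * V = 1)
    (h : U * S * Vᵀ = D) : Uᵀ * D * V = S := by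
  rw [← h]
  calc Uᵀ * (U * S * Vᵀ) * V = (Uᵀ * U) * S * (Vᵀ * V) := by simp only [Matrix.mul_assoc]
    _ = S := by rw [hU, hV, Matrix.one_mul, Matrix.mul_one]

omit [DecidableEq n] in
theorem Matrix.transpose_mul_mul_swap_eq_sub_of_eq_add {A B U V D : Matrix n n R}
    (hA : Aᵀ = A) (hB : Bᵀ = -B) (hD : Dᵀ = D) (h : Uᵀ * D * V = A + B) :
    Vᵀ * D * U = A - B := by
  have := congrArg transpose h
  rwa [transpose_mul, transpose_mul, transpose_transpose, hD, transpose_add, hA, hB,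
    ← Matrix.mul_assoc, ← sub_eq_add_neg] at this

omit [DecidableEq n] in
theorem Matrix.fromBlocks_transpose_mul_fromBlocks_neg_mul (U V D : Matrix n n R) :
    (fromBlocks (V + U) (V - U) (V - U) (V + U))ᵀ * fromBlocks D 0 0 (-D) *
        fromBlocks (V + U) (V - U) (V - U) (V + U) =
      (2 : R) • fromBlocks (Uᵀ * D * V + Vᵀ * D * U) (Uᵀ * D * V - Vᵀ * D * U)
        (Vᵀ * D * U - Uᵀ * D * V) (-(Uᵀ * D * V + Vᵀ * D * U)) := by
  simp only [fromBlocks_transpose, fromBlocks_multiply, fromBlocks_smul, transpose_add,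
    transpose_sub, fromBlocks_inj]
  refine ⟨?_, ?_, ?_, ?_⟩ <;> (noncomm_ring; module)

end

theorem stmt_15_general {n : ℕ} (A B U V : Matrix (Fin n) (Fin n) ℝ) (lam : Fin n → ℝ)
    (hA : Aᵀ = A) (hB : Bᵀ = -B)
    (hU : Uᵀ * U = 1) (hV : Vᵀ * V = 1)
    (hSVD : U * (A + B) * Vᵀ = Matrix.diagonal lam)
    (W : Matrix (Fin n ⊕ Fin n) (Fin n ⊕ Fin n) ℝ)
    (hW : W = (1 / 2 : ℝ) • Matrix.fromBlocks (V + U) (V - U) (V - U) (V + U)) :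
    Matrix.fromBlocks A B (-B) (-A)
      = Wᵀ * Matrix.fromBlocks (Matrix.diagonal lam) 0 0 (-(Matrix.diagonal lam)) * W := by
  have h_add := transpose_mul_mul_eq_of_mul_mul_transpose_eq hU hV hSVD
  have h_sub := transpose_mul_mul_swap_eq_sub_of_eq_add hA hB (diagonal_transpose lam) h_add
  rw [hW, transpose_smul, Matrix.smul_mul, Matrix.mul_smul, Matrix.smul_mul, smul_smul,
    fromBlocks_transpose_mul_fromBlocks_neg_mul, h_add, h_sub, smul_smul, fromBlocks_smul]
  congr 1 <;> module

theorem stmt_15 {n : ℕ} (A B U V : Matrix (Fin n) (Fin n) ℝ) (lam : Fin n → ℝ)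
    (hA : Aᵀ = A) (hB : Bᵀ = -B)
    (hU : Uᵀ * U = 1) (hU' : U * Uᵀ = 1) (hV : Vᵀ * V = 1) (hV' : V * Vᵀ = 1)
    (hSVD : U * (A + B) * Vᵀ = Matrix.diagonal lam)
    (W : Matrix (Fin n ⊕ Fin n) (Fin n ⊕ Fin n) ℝ)
    (hW : W = (1 / 2 : ℝ) • Matrix.fromBlocks (V + U) (V - U) (V - U) (V + U)) :
    Matrix.fromBlocks A B (-B) (-A)
      = Wᵀ * Matrix.fromBlocks (Matrix.diagonal lam) 0 0 (-(Matrix.diagonal lam)) * W :=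
  stmt_15_general A B U V lam hA hB hU hV hSVD W hW
end
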